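/- arXiv:1103.0705 — 2 statements merged into one kernel-verified Lean document; each statement's English description precedes it below -/
import Mathlib

section
/- For 0 < ε < π and positive integer n, ∫₀^ε (cos x - cos ε)^{(n-2)/2} cos(n x/2) dx = 2^{-n/2} √π · (Γ(n/2)/Γ((n+1)/2)) · (sin ε)^{n-1}. -/
/-!
Write `J p k = ∫₀^ε (cos x - cos ε)^p cos (k x) dx`. Differentiating
`(cos x - cos ε)^(p+1) sin (k x)`, which vanishes at both endpoints, and expanding
`(cos x - cos ε) cos (k x)` by product-to-sum formulas gives linear relations between
`J p (k - 1)`, `J p k`, `J p (k + 1)` and `J (p + 1) k`. Taken at `k = p + 1` and `k = p + 2` they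
yield `J (p+1) (p+2) = (p+1) sin² ε / (2p+3) · J p (p+1)`, which by `Γ (s + 1) = s Γ s` is the
ratio of the right-hand sides for `n + 2` and `n`. The induction starts at `n = 2`, where the
integrand is `cos x`, and at `n = 1`, where `√2 arcsin (sin (x/2) / sin (ε/2))` is an
antiderivative. The integrands are singular at `x = ε` when `n = 1`; they are integrable because
`cos x - cos ε ≥ c (ε - x)` on `[0, ε]`.
-/

open Real Set MeasureTheory intervalIntegral

theorem intervalIntegrable_rpow_mul_of_linear_le {f g : ℝ → ℝ} {a b c p : ℝ} (hab : a ≤ b)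
    (hc : 0 < c) (hp : -1 < p) (hf : ContinuousOn f (Icc a b)) (hg : ContinuousOn g (Icc a b))
    (hfc : ∀ x ∈ Icc a b, c * (b - x) ≤ f x) :
    IntervalIntegrable (fun x => f x ^ p * g x) volume a b := by
  rcases le_or_gt 0 p with hp0 | hp0
  · exact ((hf.rpow_const fun _ _ => Or.inr hp0).mul hg).intervalIntegrable_of_Icc hab
  obtain ⟨M, hM⟩ := isCompact_Icc.exists_bound_of_continuousOn hg
  have hmaj : IntervalIntegrable (fun x => c ^ p * M * (b - x) ^ p) volume a b := by
    have := (intervalIntegrable_rpow' hp (a := b - a) (b := 0)).comp_sub_left b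
    rw [sub_sub_cancel, sub_zero] at this
    exact this.const_mul _
  have hpos : ∀ x ∈ Ioo a b, 0 < c * (b - x) := fun x hx => mul_pos hc (sub_pos.2 hx.2)
  rw [intervalIntegrable_iff_integrableOn_Ioo_of_le hab] at hmaj ⊢
  refine hmaj.mono' ?_ ?_
  · refine ContinuousOn.aestronglyMeasurable ?_ measurableSet_Ioo
    refine ((hf.mono Ioo_subset_Icc_self).rpow_const fun x hx => Or.inl ?_).mul
      (hg.mono Ioo_subset_Icc_self)
    exact ((hpos x hx).trans_le (hfc x (Ioo_subset_Icc_self hx))).ne'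
  · filter_upwards [ae_restrict_mem measurableSet_Ioo] with x hx
    have hfx := hfc x (Ioo_subset_Icc_self hx)
    calc ‖f x ^ p * g x‖ = f x ^ p * ‖g x‖ := by
          rw [norm_mul, Real.norm_of_nonneg (rpow_nonneg ((hpos x hx).le.trans hfx) _)]
      _ ≤ (c * (b - x)) ^ p * M :=
          mul_le_mul (rpow_le_rpow_of_nonpos (hpos x hx) hfx hp0.le) (hM x (Ioo_subset_Icc_self hx))
            (norm_nonneg _) (rpow_nonneg (hpos x hx).le _)
      _ = c ^ p * M * (b - x) ^ p := by
          rw [mul_rpow hc.le (sub_pos.2 hx.2).le]; ring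

theorem exists_mul_sub_le_cos_sub_cos {ε : ℝ} (hε0 : 0 < ε) (hεπ : ε < π) :
    ∃ c > 0, ∀ x ∈ Icc 0 ε, c * (ε - x) ≤ cos x - cos ε := by
  set s := min (sin (ε / 2)) (sin ε)
  have hs : 0 < s := lt_min (sin_pos_of_pos_of_lt_pi (by linarith) (by linarith))
    (sin_pos_of_pos_of_lt_pi hε0 hεπ)
  refine ⟨2 * s / π, by positivity, fun x hx => ?_⟩
  have hmid : s ≤ sin ((x + ε) / 2) :=
    strictConcaveOn_sin_Icc.concaveOn.min_le_of_mem_Icc ⟨by linarith, by linarith⟩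
      ⟨hε0.le, hεπ.le⟩ ⟨by linarith [hx.1], by linarith [hx.2]⟩
  have hjordan : 2 / π * ((ε - x) / 2) ≤ sin ((ε - x) / 2) :=
    mul_le_sin (by linarith [hx.2]) (by linarith [hx.1])
  have hlin : 0 ≤ 2 / π * ((ε - x) / 2) := by have := hx.2; positivity
  have hsin : 0 ≤ sin ((x + ε) / 2) := hs.le.trans hmid
  rw [cos_sub_cos, show (x - ε) / 2 = -((ε - x) / 2) by ring, sin_neg]
  calc 2 * s / π * (ε - x) = 2 * (s * (2 / π * ((ε - x) / 2))) := by ring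
    _ ≤ 2 * (sin ((x + ε) / 2) * sin ((ε - x) / 2)) := by gcongr
    _ = _ := by ring

theorem cos_sub_cos_eq_two_mul_sin_sq_sub (x y : ℝ) :
    cos x - cos y = 2 * (sin (y / 2) ^ 2 - sin (x / 2) ^ 2) := by
  rw [sin_sq_eq_half_sub, sin_sq_eq_half_sub]; ring_nf

noncomputable def cosSubCosIntegral (ε p k : ℝ) : ℝ :=
  ∫ x in (0 : ℝ)..ε, (cos x - cos ε) ^ p * cos (k * x)

theorem intervalIntegrable_cos_sub_cos_rpow_mul {ε p : ℝ} (hε0 : 0 < ε) (hεπ : ε < π)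
    (hp : -1 < p) {g : ℝ → ℝ} (hg : Continuous g) :
    IntervalIntegrable (fun x => (cos x - cos ε) ^ p * g x) volume 0 ε := by
  obtain ⟨c, hc, hcos⟩ := exists_mul_sub_le_cos_sub_cos hε0 hεπ
  exact intervalIntegrable_rpow_mul_of_linear_le hε0.le hc hp (by fun_prop) hg.continuousOn hcos

theorem integral_cos_sub_cos_rpow_mul_linear_combination {ε p : ℝ} (hε0 : 0 < ε)
    (hεπ : ε < π) (hp : -1 < p) (k α β γ : ℝ) :
    ∫ x in (0 : ℝ)..ε, (cos x - cos ε) ^ p *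
        (α * cos ((k - 1) * x) + β * cos ((k + 1) * x) + γ * cos (k * x)) =
      α * cosSubCosIntegral ε p (k - 1) + β * cosSubCosIntegral ε p (k + 1) +
        γ * cosSubCosIntegral ε p k := by
  have hi (l : ℝ) :
      IntervalIntegrable (fun x => (cos x - cos ε) ^ p * cos (l * x)) volume 0 ε :=
    intervalIntegrable_cos_sub_cos_rpow_mul hε0 hεπ hp (by fun_prop)
  simp only [mul_add, mul_left_comm _ α, mul_left_comm _ β, mul_left_comm _ γ]
  rw [integral_add (((hi _).const_mul _).add ((hi _).const_mul _)) ((hi _).const_mul _),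
    integral_add ((hi _).const_mul _) ((hi _).const_mul _)]
  simp only [intervalIntegral.integral_const_mul, cosSubCosIntegral]

theorem cosSubCosIntegral_recurrence {ε p : ℝ} (hε0 : 0 < ε) (hεπ : ε < π) (hp : -1 < p)
    (k : ℝ) :
    (k - p - 1) * cosSubCosIntegral ε p (k - 1) + (k + p + 1) * cosSubCosIntegral ε p (k + 1) =
      2 * k * cos ε * cosSubCosIntegral ε p k := by
  have hderiv (x : ℝ) (hx : x ∈ Ioo 0 ε) :
      HasDerivWithinAt (fun y => (cos y - cos ε) ^ (p + 1) * sin (k * y))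
        ((cos x - cos ε) ^ p * ((k - p - 1) / 2 * cos ((k - 1) * x) +
          (k + p + 1) / 2 * cos ((k + 1) * x) + -(k * cos ε) * cos (k * x))) (Ioi x) x := by
    have hb : 0 < cos x - cos ε := sub_pos.2 (cos_lt_cos_of_nonneg_of_le_pi hx.1.le hεπ.le hx.2)
    have hF := (((hasDerivAt_cos x).sub_const (cos ε)).rpow_const (p := p + 1)
      (Or.inl hb.ne')).mul ((hasDerivAt_sin (k * x)).comp x ((hasDerivAt_id x).const_mul k))
    refine hF.hasDerivWithinAt.congr_deriv ?_
    rw [add_sub_cancel_right, rpow_add_one hb.ne', sub_one_mul, add_one_mul, cos_sub, cos_add,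
      Function.comp_apply]
    ring
  have hF : ContinuousOn (fun y => (cos y - cos ε) ^ (p + 1) * sin (k * y)) (Icc 0 ε) :=
    (((continuous_cos.sub continuous_const).rpow_const fun _ => Or.inr (by linarith)).mul
      (by fun_prop)).continuousOn
  have hFTC := integral_eq_sub_of_hasDeriv_right_of_le hε0.le hF hderiv
    (intervalIntegrable_cos_sub_cos_rpow_mul hε0 hεπ hp (by fun_prop))
  rw [integral_cos_sub_cos_rpow_mul_linear_combination hε0 hεπ hp, sub_self,
    zero_rpow (by linarith), zero_mul, mul_zero, sin_zero, mul_zero, sub_zero] at hFTC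
  linarith

theorem cosSubCosIntegral_add_one {ε p : ℝ} (hε0 : 0 < ε) (hεπ : ε < π) (hp : -1 < p)
    (k : ℝ) :
    cosSubCosIntegral ε (p + 1) k = 1 / 2 * cosSubCosIntegral ε p (k - 1) +
      1 / 2 * cosSubCosIntegral ε p (k + 1) + -cos ε * cosSubCosIntegral ε p k := by
  rw [← integral_cos_sub_cos_rpow_mul_linear_combination hε0 hεπ hp]
  refine integral_congr fun x hx => ?_
  rw [uIcc_of_le hε0.le] at hx
  have hb : 0 ≤ cos x - cos ε := sub_nonneg.2 (cos_le_cos_of_nonneg_of_le_pi hx.1 hεπ.le hx.2)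
  rw [rpow_add_one' hb (by linarith), sub_one_mul, add_one_mul, cos_sub, cos_add]
  ring

theorem cosSubCosIntegral_add_one_add_two {ε p : ℝ} (hε0 : 0 < ε) (hεπ : ε < π)
    (hp : -1 < p) :
    cosSubCosIntegral ε (p + 1) (p + 2) =
      (p + 1) * sin ε ^ 2 / (2 * p + 3) * cosSubCosIntegral ε p (p + 1) := by
  have h1 := cosSubCosIntegral_recurrence hε0 hεπ hp (p + 1)
  have h2 := cosSubCosIntegral_recurrence hε0 hεπ hp (p + 2)
  have h3 := cosSubCosIntegral_add_one hε0 hεπ hp (p + 2)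
  rw [show p + 1 + 1 = p + 2 by ring] at h1
  rw [show p + 2 - 1 = p + 1 by ring, show p + 2 + 1 = p + 3 by ring] at h2 h3
  have hB : cosSubCosIntegral ε p (p + 2) = cos ε * cosSubCosIntegral ε p (p + 1) := by
    refine mul_left_cancel₀ (show 2 * (p + 1) ≠ 0 by linarith) ?_
    linear_combination h1
  rw [div_mul_eq_mul_div, eq_div_iff (by linarith)]
  linear_combination (2 * p + 3) * h3 + 1 / 2 * h2 - (p + 1) * cos ε * hB
    - (p + 1) * cosSubCosIntegral ε p (p + 1) * sin_sq_add_cos_sq ε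

theorem hasDerivAt_arcsin_sin_half_div {ε x : ℝ} (hε0 : 0 < ε) (hεπ : ε < π)
    (hx : x ∈ Ioo 0 ε) :
    HasDerivAt (fun y => √2 * arcsin (sin (y / 2) / sin (ε / 2)))
      ((cos x - cos ε) ^ (-(1 / 2) : ℝ) * cos (1 / 2 * x)) x := by
  have ha : 0 < sin (ε / 2) := sin_pos_of_pos_of_lt_pi (by linarith) (by linarith)
  have hsx : 0 < sin (x / 2) := sin_pos_of_pos_of_lt_pi (by linarith [hx.1]) (by linarith [hx.2])
  have hsxa : sin (x / 2) < sin (ε / 2) := strictMonoOn_sin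
    ⟨by linarith [hx.1], by linarith [hx.2]⟩ ⟨by linarith, by linarith⟩ (by linarith [hx.2])
  have ht0 : 0 < sin (x / 2) / sin (ε / 2) := div_pos hsx ha
  have ht1 : sin (x / 2) / sin (ε / 2) < 1 := (div_lt_one ha).2 hsxa
  have hrad : 0 < 1 - (sin (x / 2) / sin (ε / 2)) ^ 2 := by nlinarith
  have hb :
      cos x - cos ε = (√2 * sin (ε / 2) * √(1 - (sin (x / 2) / sin (ε / 2)) ^ 2)) ^ 2 := by
    rw [mul_pow, mul_pow, sq_sqrt zero_le_two, sq_sqrt hrad.le,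
      cos_sub_cos_eq_two_mul_sin_sq_sub]
    field_simp
  have hinner : HasDerivAt (fun y => sin (y / 2) / sin (ε / 2))
      (cos (x / 2) * (1 / 2) / sin (ε / 2)) x :=
    ((hasDerivAt_sin _).comp x ((hasDerivAt_id x).div_const 2)).div_const _
  refine (((hasDerivAt_arcsin ?_ ht1.ne).comp x hinner).const_mul √2).congr_deriv ?_
  · linarith
  have hsqrt := sqrt_pos.2 hrad
  rw [hb, rpow_neg (sq_nonneg _), ← sqrt_eq_rpow, sqrt_sq (by positivity),
    show 1 / 2 * x = x / 2 by ring]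
  field_simp
  rw [sq_sqrt zero_le_two]

theorem cosSubCosIntegral_neg_half_half {ε : ℝ} (hε0 : 0 < ε) (hεπ : ε < π) :
    cosSubCosIntegral ε (-(1 / 2)) (1 / 2) = π / √2 := by
  have hG : ContinuousOn (fun y => √2 * arcsin (sin (y / 2) / sin (ε / 2))) (Icc 0 ε) := by
    fun_prop
  rw [cosSubCosIntegral, integral_eq_sub_of_hasDeriv_right_of_le hε0.le hG
    (fun x hx => (hasDerivAt_arcsin_sin_half_div hε0 hεπ hx).hasDerivWithinAt)
    (intervalIntegrable_cos_sub_cos_rpow_mul hε0 hεπ (by norm_num) (by fun_prop))]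
  have ha : sin (ε / 2) ≠ 0 := (sin_pos_of_pos_of_lt_pi (by linarith) (by linarith)).ne'
  simp only [zero_div, sin_zero, arcsin_zero, mul_zero, sub_zero, div_self ha, arcsin_one]
  field_simp
  rw [sq_sqrt zero_le_two]

theorem cosSubCosIntegral_zero_one (ε : ℝ) : cosSubCosIntegral ε 0 1 = sin ε := by
  simp [cosSubCosIntegral]

theorem two_rpow_mul_Gamma_div_Gamma_add_two {s : ℝ} (hs : 0 < s) :
    2 ^ (-(s + 2) / 2) * √π * (Gamma ((s + 2) / 2) / Gamma ((s + 2 + 1) / 2)) =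
      s / (2 * (s + 1)) * (2 ^ (-s / 2) * √π * (Gamma (s / 2) / Gamma ((s + 1) / 2))) := by
  rw [show (s + 2) / 2 = s / 2 + 1 by ring, show (s + 2 + 1) / 2 = (s + 1) / 2 + 1 by ring,
    show -(s + 2) / 2 = -s / 2 + -1 by ring, Gamma_add_one (by positivity),
    Gamma_add_one (by positivity), rpow_add two_pos, rpow_neg_one]
  have := Gamma_pos_of_pos (show 0 < (s + 1) / 2 by positivity)
  field_simp

theorem cosSubCosIntegral_natCast_eq {ε : ℝ} (hε0 : 0 < ε) (hεπ : ε < π) (n : ℕ)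
    (hn : 1 ≤ n) :
    cosSubCosIntegral ε (((n : ℝ) - 2) / 2) (n / 2) =
      2 ^ (-(n : ℝ) / 2) * √π * (Gamma ((n : ℝ) / 2) / Gamma (((n : ℝ) + 1) / 2)) *
        sin ε ^ (n - 1) := by
  obtain ⟨m, rfl⟩ := Nat.exists_eq_add_of_le' hn
  induction m using Nat.twoStepInduction with
  | zero =>
    norm_num
    rw [cosSubCosIntegral_neg_half_half hε0 hεπ, Gamma_one_half_eq, mul_assoc,
      mul_self_sqrt pi_pos.le, rpow_neg zero_le_two, ← sqrt_eq_rpow, div_eq_inv_mul]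
  | one =>
    norm_num
    rw [cosSubCosIntegral_zero_one, show (3 / 2 : ℝ) = 1 / 2 + 1 by norm_num,
      Gamma_add_one (by norm_num), Gamma_one_half_eq]
    field_simp
  | more m ih _ =>
    set s : ℝ := ((m + 1 : ℕ) : ℝ)
    have hs : 0 < s := by positivity
    have hcast : ((m + 2 + 1 : ℕ) : ℝ) = s + 2 := by push_cast [s]; ring
    have hstep := cosSubCosIntegral_add_one_add_two hε0 hεπ (p := (s - 2) / 2) (by linarith)
    rw [show (s - 2) / 2 + 1 = s / 2 by ring, ih (by omega)] at hstep
    rw [hcast, two_rpow_mul_Gamma_div_Gamma_add_two hs, show (s + 2 - 2) / 2 = s / 2 by ring,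
      show (s + 2) / 2 = (s - 2) / 2 + 2 by ring, hstep,
      show 2 * ((s - 2) / 2) + 3 = s + 1 by ring, show m + 2 + 1 - 1 = (m + 1 - 1) + 2 by omega,
      pow_add]
    field_simp

theorem integral_cos_sub_cos_rpow_mul_cos (n : ℕ) (hn : 1 ≤ n) (ε : ℝ)
    (hε0 : 0 < ε) (hεπ : ε < π) :
    ∫ x in (0:ℝ)..ε, (Real.cos x - Real.cos ε) ^ (((n : ℝ) - 2) / 2) * Real.cos (n * x / 2)
      = 2 ^ (-(n : ℝ) / 2) * Real.sqrt π
          * (Real.Gamma ((n : ℝ) / 2) / Real.Gamma (((n : ℝ) + 1) / 2))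
          * Real.sin ε ^ (n - 1) := by
  simp_rw [mul_div_right_comm _ _ (2 : ℝ)]
  exact cosSubCosIntegral_natCast_eq hε0 hεπ n hn
end

section
/- For positive integer n and reals μ > 0, θ ≠ 0, the integral ∫₀^∞ (sinh(t/2))^{-n} ((μ/2) coth(t/2))^{-n} (1 + (2θ/(μ coth(t/2)))²)^{-n/2} cos(n arctan(2θ/(μ coth(t/2)))) dt equals (2^n/(μ^{n-1}|θ|)) ∫₀^{2|θ|/μ} (1 - (μ/(2|θ|))² ρ²)^{n/2 - 1} (1+ρ²)^{-n/2} cos(n arctan ρ) dρ, via the substitution ρ = 2θ/(μ coth(t/2)). -/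
/-!
Substitute `ρ = (2|θ|/μ) tanh (t/2)`, which maps `(0, ∞)` monotonically onto `(0, 2|θ|/μ)` with
`dρ = (|θ|/μ) cosh⁻² (t/2) dt`. Since `coth (t/2) = 1 / tanh (t/2)`, the argument
`2θ / (μ coth (t/2))` of the original integrand is `±ρ`, and both `1 + ρ²` and
`cos (n arctan ρ)` are even. Finally `sinh⁻ⁿ coth⁻ⁿ = cosh⁻ⁿ`, while `1 - tanh² = cosh⁻²` turns the
weight `(1 - (μρ/(2|θ|))²)^(n/2 - 1)` into `cosh^(2-n)`, which the Jacobian `cosh⁻²` brings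
back to `cosh⁻ⁿ`.
-/

open Real MeasureTheory Set

namespace Real

theorem hasDerivAt_tanh (x : ℝ) : HasDerivAt tanh (cosh x ^ 2)⁻¹ x := by
  have h := (hasDerivAt_sinh x).div (hasDerivAt_cosh x) (cosh_pos x).ne'
  rw [show tanh = sinh / cosh from funext tanh_eq_sinh_div_cosh]
  refine h.congr_deriv ?_
  rw [← sq, ← sq, cosh_sq_sub_sinh_sq, one_div]

theorem tanh_strictMono : StrictMono tanh :=
  strictMono_of_deriv_pos fun x ↦ by
    rw [(hasDerivAt_tanh x).deriv]
    exact inv_pos.mpr (pow_pos (cosh_pos x) 2)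

theorem tanh_pos {x : ℝ} (hx : 0 < x) : 0 < tanh x := by
  simpa using tanh_strictMono hx

theorem one_sub_tanh_sq (x : ℝ) : 1 - tanh x ^ 2 = (cosh x ^ 2)⁻¹ := by
  have := cosh_sq_sub_sinh_sq x
  have := (cosh_pos x).ne'
  rw [tanh_eq_sinh_div_cosh]
  field_simp
  linarith

theorem cos_mul_arctan_abs (a x : ℝ) : cos (a * arctan |x|) = cos (a * arctan x) := by
  rcases abs_choice x with h | h <;> simp [h, arctan_neg]

theorem one_sub_tanh_sq_rpow (x a : ℝ) :
    (1 - tanh x ^ 2) ^ (a / 2 - 1) = cosh x ^ 2 * cosh x ^ (-a) := by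
  have hcosh := cosh_pos x
  rw [one_sub_tanh_sq, ← rpow_two, ← rpow_neg hcosh.le, ← rpow_mul hcosh.le,
    ← rpow_add hcosh]
  ring_nf

theorem sinh_rpow_mul_mul_cosh_div_sinh_rpow {x : ℝ} (hx : 0 < x) {b : ℝ} (hb : 0 ≤ b) (a : ℝ) :
    sinh x ^ a * (b * (cosh x / sinh x)) ^ a = (b * cosh x) ^ a := by
  have hsinh := sinh_pos_iff.mpr hx
  rw [← mul_rpow hsinh.le (by positivity [cosh_pos x])]
  congr 1
  field_simp

theorem div_mul_cosh_div_sinh (a b x : ℝ) : a / (b * (cosh x / sinh x)) = a / b * tanh x := by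
  rw [tanh_eq_sinh_div_cosh]
  simp only [div_eq_mul_inv, mul_inv, inv_inv]
  ring

end Real

theorem image_mul_tanh_half_Ioi {c : ℝ} (hc : 0 < c) :
    (fun t ↦ c * tanh (t / 2)) '' Ioi 0 = Ioo 0 c := by
  ext y
  constructor
  · rintro ⟨t, ht, rfl⟩
    exact ⟨mul_pos hc (tanh_pos (half_pos ht)), mul_lt_of_lt_one_right hc (tanh_lt_one _)⟩
  · rintro ⟨hy0, hyc⟩
    have hy : y / c ∈ Ioo (-1) 1 := ⟨by linarith [div_pos hy0 hc], (div_lt_one hc).2 hyc⟩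
    refine ⟨2 * artanh (y / c), by simpa using artanh_pos ⟨div_pos hy0 hc, hy.2⟩, ?_⟩
    beta_reduce
    rw [mul_div_cancel_left₀ _ two_ne_zero, tanh_artanh hy, mul_div_cancel₀ _ hc.ne']

theorem intervalIntegral_eq_integral_Ioi_mul_tanh_half {E : Type*} [NormedAddCommGroup E]
    [NormedSpace ℝ E] {c : ℝ} (hc : 0 < c) (g : ℝ → E) :
    ∫ ρ in (0:ℝ)..c, g ρ = ∫ t in Ioi 0, (c / (2 * cosh (t / 2) ^ 2)) • g (c * tanh (t / 2)) := by
  have hderiv (t : ℝ) :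
      HasDerivAt (fun t ↦ c * tanh (t / 2)) (c / (2 * cosh (t / 2) ^ 2)) t := by
    refine (((hasDerivAt_tanh (t / 2)).comp t ((hasDerivAt_id t).div_const 2)).const_mul c
      ).congr_deriv ?_
    field_simp
  have hmono : MonotoneOn (fun t ↦ c * tanh (t / 2)) (Ioi 0) := fun a _ b _ hab ↦
    mul_le_mul_of_nonneg_left (tanh_strictMono.monotone (by linarith)) hc.le
  rw [intervalIntegral.integral_of_le hc.le, integral_Ioc_eq_integral_Ioo,
    ← image_mul_tanh_half_Ioi hc]
  exact integral_image_eq_integral_deriv_smul_of_monotoneOn measurableSet_Ioi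
    (fun t _ ↦ (hderiv t).hasDerivWithinAt) hmono g

theorem integral_substitution_rho (n : ℕ) (hn : 1 ≤ n) (μ θ : ℝ) (hμ : 0 < μ) (hθ : θ ≠ 0) :
    ∫ t in Ioi (0:ℝ),
        (Real.sinh (t / 2)) ^ (-(n : ℝ))
          * (μ / 2 * (Real.cosh (t / 2) / Real.sinh (t / 2))) ^ (-(n : ℝ))
          * (1 + (2 * θ / (μ * (Real.cosh (t / 2) / Real.sinh (t / 2)))) ^ 2) ^ (-(n : ℝ) / 2)
          * Real.cos (n * Real.arctan (2 * θ / (μ * (Real.cosh (t / 2) / Real.sinh (t / 2)))))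
      = (2 ^ n / (μ ^ (n - 1) * |θ|)) *
          ∫ ρ in (0:ℝ)..(2 * |θ| / μ),
            (1 - (μ / (2 * |θ|)) ^ 2 * ρ ^ 2) ^ ((n : ℝ) / 2 - 1)
              * (1 + ρ ^ 2) ^ (-(n : ℝ) / 2) * Real.cos (n * Real.arctan ρ) := by
  have hθ' : 0 < |θ| := abs_pos.mpr hθ
  have hc : 0 < 2 * |θ| / μ := by positivity
  rw [intervalIntegral_eq_integral_Ioi_mul_tanh_half hc, ← integral_const_mul]
  refine setIntegral_congr_fun measurableSet_Ioi fun t ht ↦ ?_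
  have hx : 0 < t / 2 := half_pos ht
  have hρ : |2 * θ / μ * tanh (t / 2)| = 2 * |θ| / μ * tanh (t / 2) := by
    rw [abs_mul, abs_div, abs_mul, abs_two, abs_of_pos hμ, abs_of_pos (tanh_pos hx)]
  have hsq : (μ / (2 * |θ|)) ^ 2 * (2 * |θ| / μ * tanh (t / 2)) ^ 2 = tanh (t / 2) ^ 2 := by
    field_simp
  simp only [sinh_rpow_mul_mul_cosh_div_sinh_rpow hx (by positivity : 0 ≤ μ / 2),
    div_mul_cosh_div_sinh, ← cos_mul_arctan_abs _ (2 * θ / μ * _), ← sq_abs (2 * θ / μ * _), hρ,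
    smul_eq_mul, hsq, one_sub_tanh_sq_rpow, mul_rpow (by positivity : 0 ≤ μ / 2) (cosh_pos _).le]
  have hμn : μ ^ n = μ ^ (n - 1) * μ := by rw [← pow_succ, Nat.sub_add_cancel hn]
  have hcosh := (cosh_pos (t / 2)).ne'
  rw [rpow_neg (by positivity), rpow_natCast, div_pow, hμn]
  field_simp
end
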